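/- arXiv:2602.20536 — 4 statements merged into one kernel-verified Lean document; each statement's English description precedes it below -/
import Mathlib

section
/- For every integer n ≥ 1, the polynomials A(q) = (1+q^n)·[n]_q, B(q) = [n+1]_q·[n-1]_q, and C(q) = 1 + q·[n]_q^2 satisfy the q-Pythagoras equation A(q)^2 + q·B(q)^2 = C(q)·C*(q), where C*(q) = q^(deg C)·C(1/q). -/
open Polynomial

noncomputable def qInt (n : ℕ) : ℤ[X] := ∑ i ∈ Finset.range n, X ^ i

lemma qInt_mul (n : ℕ) : qInt n * (X - 1) = X ^ n - 1 := geom_sum_mul X n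

lemma qInt_natDegree_le (n : ℕ) : (qInt (n + 1)).natDegree ≤ n := by
  unfold qInt
  refine Polynomial.natDegree_sum_le_of_forall_le _ _ fun i hi => ?_
  simpa [Polynomial.natDegree_X_pow] using Nat.lt_succ_iff.mp (Finset.mem_range.mp hi)

lemma reflect_sum {s : Finset ℕ} (N : ℕ) (f : ℕ → ℤ[X]) :
    (∑ i ∈ s, f i).reflect N = ∑ i ∈ s, (f i).reflect N := by
  classical
  induction s using Finset.induction_on with
  | empty => simp [reflect_zero]
  | insert _ _ h ih => simp [Finset.sum_insert h, reflect_add, ih]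

lemma qInt_reflect (m : ℕ) : (qInt (m + 1)).reflect m = qInt (m + 1) := by
  unfold qInt
  rw [reflect_sum]
  have h1 : ∀ i ∈ Finset.range (m + 1), (X ^ i : ℤ[X]).reflect m = X ^ (m - i) := by
    intro i hi
    rw [reflect_monomial, revAt_le (Nat.lt_succ_iff.mp (Finset.mem_range.mp hi))]
  rw [Finset.sum_congr rfl h1]
  rw [← Finset.sum_range_reflect (fun i => (X : ℤ[X]) ^ i) (m + 1)]
  simp

/-- For every n ≥ 1, the polynomials A = (1+qⁿ)·[n]_q, B = [n+1]_q·[n-1]_q,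
C = 1 + q·[n]_q² satisfy the q-Pythagoras equation A² + q·B² = C·C*, where
C* = q^(deg C)·C(1/q) and deg C = 2n - 1. -/
theorem qPythagoras_integer_series (n : ℕ) (hn : 1 ≤ n) :
    ((1 + X ^ n) * qInt n) ^ 2 + X * (qInt (n + 1) * qInt (n - 1)) ^ 2
    = (1 + X * (qInt n) ^ 2) * ((1 + X * (qInt n) ^ 2).reflect (2 * n - 1)) := by
  obtain ⟨m, rfl⟩ := Nat.exists_eq_add_of_le hn
  rw [add_comm 1 m]
  set P : ℤ[X] := qInt (m + 1) with hP
  have hd : 2 * (m + 1) - 1 = 2 * m + 1 := by omega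
  have hrefl : (1 + X * P ^ 2).reflect (2 * (m + 1) - 1) = X ^ (2 * m + 1) + P ^ 2 := by
    rw [hd, reflect_add, reflect_one]
    have : (X * P ^ 2 : ℤ[X]).reflect (1 + 2 * m)
        = (X : ℤ[X]).reflect 1 * (P ^ 2).reflect (2 * m) := by
      apply reflect_mul
      · simp
      · calc (P ^ 2).natDegree ≤ 2 * P.natDegree := by
              simpa [two_mul] using Polynomial.natDegree_pow_le (p := P) (n := 2)
            _ ≤ 2 * m := by
              exact Nat.mul_le_mul_left 2 (qInt_natDegree_le m)
    rw [show (2 * m + 1) = 1 + 2 * m by ring, this]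
    have h2 : (P ^ 2).reflect (2 * m) = (P.reflect m) ^ 2 := by
      rw [sq, sq, two_mul, reflect_mul _ _ (qInt_natDegree_le m) (qInt_natDegree_le m)]
    rw [h2, qInt_reflect, reflect_one_X, one_mul]
  have hB : qInt (m + 1 + 1) * qInt m = P ^ 2 - X ^ m := by
    have hX1 : ((X : ℤ[X]) - 1) ≠ 0 := by
      intro h
      have := congrArg (Polynomial.eval 0) h
      simp at this
    have hc : ((X : ℤ[X]) - 1) ^ 2 ≠ 0 := pow_ne_zero _ hX1
    apply mul_right_cancel₀ hc
    have e1 := qInt_mul (m + 1 + 1)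
    have e2 := qInt_mul m
    have e3 := qInt_mul (m + 1)
    calc qInt (m + 1 + 1) * qInt m * (X - 1) ^ 2
        = (qInt (m + 1 + 1) * (X - 1)) * (qInt m * (X - 1)) := by ring
      _ = (X ^ (m + 1 + 1) - 1) * (X ^ m - 1) := by rw [e1, e2]
      _ = (X ^ (m + 1) - 1) ^ 2 - X ^ m * (X - 1) ^ 2 := by ring
      _ = (P ^ 2 - X ^ m) * (X - 1) ^ 2 := by rw [← e3, hP]; ring
  rw [hrefl, Nat.add_sub_cancel, hB]
  ring
end

section
/- Let N₁ = N_{m/n}, D₁ = D_{m/n} and N₂ = N_{n/m}, D₂ = D_{n/m} be the numerators and denominators of the q-rationals [m/n]_q and [n/m]_q, related by N₂(q) = q^d·D₁(1/q), D₂(q) = q^d·N₁(1/q) with d = deg N₁. Then the polynomials A = q·N₁N₂ + D₁D₂, B = N₁D₂ − D₁N₂, C = q·N₁^2 + D₁^2 satisfy the q-Pythagoras equation A^2 + q·B^2 = C·C*, where C* = q^{2d+1}·C(1/q). -/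
open Polynomial

/-- Let N₁ = N_{m/n}, D₁ = D_{m/n} be the numerator and denominator of a
q-rational, with deg D₁ < d = deg N₁, and let N₂ = q^d·D₁(1/q),
D₂ = q^d·N₁(1/q) be those of the inverse q-rational. Then the polynomials
A = q·N₁N₂ + D₁D₂, B = N₁D₂ − D₁N₂, C = q·N₁² + D₁² satisfy the q-Pythagoras
equation A² + q·B² = C·C*, where C* = q^(2d+1)·C(1/q). -/
theorem q_euclid_pythagoras (N₁ D₁ N₂ D₂ : ℤ[X])
    (hd : D₁.natDegree < N₁.natDegree)
    (hN₂ : N₂ = D₁.reflect N₁.natDegree) (hD₂ : D₂ = N₁.reflect N₁.natDegree) :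
    (X * N₁ * N₂ + D₁ * D₂) ^ 2 + X * (N₁ * D₂ - D₁ * N₂) ^ 2
      = (X * N₁ ^ 2 + D₁ ^ 2) * ((X * N₁ ^ 2 + D₁ ^ 2).reflect (2 * N₁.natDegree + 1)) := by
  set d := N₁.natDegree with hdd
  have hN : N₁.natDegree ≤ d := le_rfl
  have hD : D₁.natDegree ≤ d := hd.le
  have key : (X * N₁ ^ 2 + D₁ ^ 2).reflect (2 * d + 1) = X * N₂ ^ 2 + D₂ ^ 2 := by
    rw [reflect_add]
    have h1 : (X * N₁ ^ 2).reflect (2 * d + 1) = D₂ ^ 2 := by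
      have : 2 * d + 1 = 1 + (d + d) := by ring
      rw [this, reflect_mul _ _ (natDegree_X_le) (by
        simpa [pow_two] using natDegree_mul_le.trans (add_le_add hN hN)),
        reflect_one_X, one_mul, pow_two, pow_two,
        reflect_mul _ _ hN hN, hD₂]
    have h2 : (D₁ ^ 2).reflect (2 * d + 1) = X * N₂ ^ 2 := by
      have e : D₁ ^ 2 = 1 * (D₁ * D₁) := by ring
      have : 2 * d + 1 = 1 + (d + d) := by ring
      rw [e, this, reflect_mul _ _ (by simp) (natDegree_mul_le.trans (add_le_add hD hD)),
        reflect_one, pow_one, reflect_mul _ _ hD hD, hN₂, pow_two]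
    rw [h1, h2]; ring
  rw [key, hN₂, hD₂]; ring
end

section
/- The polynomials A(q) = (1+q)(1+q^2)(1+q+q^2), B(q) = 1+q+q^2+q^3+q^4, C(q) = 1+3q+3q^2+3q^3+2q^4+q^5 satisfy A(q)^2 + q·B(q)^2 = C(q)·C*(q) with C*(q) = q^5·C(1/q); and at q = 1 they give the Pythagorean triple (12, 5, 13). -/
open Polynomial

lemma refl_C : ((1 + 3 * X + 3 * X ^ 2 + 3 * X ^ 3 + 2 * X ^ 4 + X ^ 5 : ℤ[X]).reflect 5)
    = 1 + 2 * X + 3 * X ^ 2 + 3 * X ^ 3 + 3 * X ^ 4 + X ^ 5 := by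
  have h : (1 + 3 * X + 3 * X ^ 2 + 3 * X ^ 3 + 2 * X ^ 4 + X ^ 5 : ℤ[X])
      = C 1 * X ^ 0 + C 3 * X ^ 1 + C 3 * X ^ 2 + C 3 * X ^ 3 + C 2 * X ^ 4 + C 1 * X ^ 5 := by
    simp only [map_ofNat, map_one]; ring
  rw [h]
  simp only [reflect_add, reflect_C_mul_X_pow]
  norm_num [revAt_le]
  ring

/-- The polynomials A = (1+q)(1+q²)(1+q+q²), B = 1+q+q²+q³+q⁴,
C = 1+3q+3q²+3q³+2q⁴+q⁵ satisfy A² + q·B² = C·C* with C* = q⁵·C(1/q), and at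
q = 1 they give the Pythagorean triple (12, 5, 13). -/
theorem qPythagoras_12_5_13 :
    ((1 + X) * (1 + X ^ 2) * (1 + X + X ^ 2) : ℤ[X]) ^ 2
        + X * (1 + X + X ^ 2 + X ^ 3 + X ^ 4) ^ 2
      = (1 + 3 * X + 3 * X ^ 2 + 3 * X ^ 3 + 2 * X ^ 4 + X ^ 5)
        * ((1 + 3 * X + 3 * X ^ 2 + 3 * X ^ 3 + 2 * X ^ 4 + X ^ 5 : ℤ[X]).reflect 5)
    ∧ (((1 + X) * (1 + X ^ 2) * (1 + X + X ^ 2) : ℤ[X]).eval 1 = 12)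
    ∧ ((1 + X + X ^ 2 + X ^ 3 + X ^ 4 : ℤ[X]).eval 1 = 5)
    ∧ ((1 + 3 * X + 3 * X ^ 2 + 3 * X ^ 3 + 2 * X ^ 4 + X ^ 5 : ℤ[X]).eval 1 = 13) := by
  refine ⟨?_, by simp, by simp, by simp⟩
  rw [refl_C]; ring
end

section
/- The polynomials A(q) = (1+q)(1+q^2)^2(1+q+q^2), B(q) = [7]_q = 1+q+q^2+q^3+q^4+q^5+q^6, C(q) = 1+3q+5q^2+5q^3+5q^4+3q^5+2q^6+q^7 satisfy A(q)^2 + q·B(q)^2 = C(q)·C*(q) with C*(q) = q^7·C(1/q), and at q = 1 they give the Pythagorean triple (24, 7, 25). -/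
open Polynomial

/-- The polynomials A = (1+q)(1+q²)²(1+q+q²), B = [7]_q = 1+q+⋯+q⁶,
C = 1+3q+5q²+5q³+5q⁴+3q⁵+2q⁶+q⁷ satisfy A² + q·B² = C·C* with C* = q⁷·C(1/q),
and at q = 1 they give the Pythagorean triple (24, 7, 25). -/
theorem qPythagoras_24_7_25 :
    (((1 + X) * (1 + X ^ 2) ^ 2 * (1 + X + X ^ 2) : ℤ[X]) ^ 2
        + X * (1 + X + X ^ 2 + X ^ 3 + X ^ 4 + X ^ 5 + X ^ 6) ^ 2
      = (1 + 3 * X + 5 * X ^ 2 + 5 * X ^ 3 + 5 * X ^ 4 + 3 * X ^ 5 + 2 * X ^ 6 + X ^ 7)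
        * ((1 + 3 * X + 5 * X ^ 2 + 5 * X ^ 3 + 5 * X ^ 4 + 3 * X ^ 5 + 2 * X ^ 6
            + X ^ 7 : ℤ[X]).reflect 7))
    ∧ (((1 + X) * (1 + X ^ 2) ^ 2 * (1 + X + X ^ 2) : ℤ[X]).eval 1 = 24)
    ∧ ((1 + X + X ^ 2 + X ^ 3 + X ^ 4 + X ^ 5 + X ^ 6 : ℤ[X]).eval 1 = 7)
    ∧ ((1 + 3 * X + 5 * X ^ 2 + 5 * X ^ 3 + 5 * X ^ 4 + 3 * X ^ 5 + 2 * X ^ 6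
        + X ^ 7 : ℤ[X]).eval 1 = 25) := by
  have hrefl : ((1 + 3 * X + 5 * X ^ 2 + 5 * X ^ 3 + 5 * X ^ 4 + 3 * X ^ 5 + 2 * X ^ 6
            + X ^ 7 : ℤ[X]).reflect 7)
      = 1 + 2 * X + 3 * X ^ 2 + 5 * X ^ 3 + 5 * X ^ 4 + 5 * X ^ 5 + 3 * X ^ 6 + X ^ 7 := by
    rw [show (1 + 3 * X + 5 * X ^ 2 + 5 * X ^ 3 + 5 * X ^ 4 + 3 * X ^ 5 + 2 * X ^ 6
            + X ^ 7 : ℤ[X]) = C 1 * X ^ 0 + C 3 * X ^ 1 + C 5 * X ^ 2 + C 5 * X ^ 3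
            + C 5 * X ^ 4 + C 3 * X ^ 5 + C 2 * X ^ 6 + C 1 * X ^ 7 by
      simp only [map_one, map_ofNat]; ring]
    simp only [reflect_add, reflect_C_mul_X_pow]
    norm_num [revAt_le]
    ring
  refine ⟨?_, ?_, ?_, ?_⟩
  · rw [hrefl]; ring
  · simp
  · simp
  · simp
end
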